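/- arXiv:1206.5437 — 2 statements merged into one kernel-verified Lean document; each statement's English description precedes it below -/
import Mathlib

section
/- Let ℚ(s) be the field of rational functions in s over ℚ and z = s − s⁻¹. Let λ₀, λ₁, …, λ_{n−1} be pairwise distinct partitions and set b_j = z · C_{λ_j}(s²) + z⁻¹ ∈ ℚ(s). Then the n × n matrix B over ℚ(s) with entries B_{k,j} = (b_j)^k for 0 ≤ k, j ≤ n − 1 is nonsingular (its determinant is nonzero). -/
/-- A partition: a finite non-increasing list of positive integers. -/
structure YPartition where
  parts : List ℕ
  pos : ∀ p ∈ parts, 0 < p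
  sorted : parts.Pairwise (· ≥ ·)

/-- The evaluation `C_λ(s²) = Σ_{(i,j) ∈ Y(λ)} s^(2(j-i))` of the content polynomial
at `q = s²` inside the rational function field `ℚ(s)`.  Rows and columns are indexed
from `0`; the box in (0-indexed) row `i` and column `j` has content `j - i`. -/
noncomputable def contentEval (lam : YPartition) : RatFunc ℚ :=
  ∑ i ∈ Finset.range lam.parts.length, ∑ j ∈ Finset.range (lam.parts.getD i 0),
    (RatFunc.X : RatFunc ℚ) ^ (2 * ((j : ℤ) - (i : ℤ)))

/-!
Since `z = s - s⁻¹ ≠ 0`, the nodes `b_j` are distinct as soon as `λ ↦ C_λ(s²)` is injective,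
and then `B` is the transpose of a Vandermonde matrix with distinct nodes. Summing each row of the
diagram as a geometric series in `s²` gives, for `N` at least the number of rows,
`(s² - 1) s^(2N) C_λ(s²) = ∑_{i<N} (s^(2(λ_i + N - i)) - s^(2(N - i)))`.
So `C_λ(s²)` determines the polynomial `∑_{i<N} s^(2 β_i)` with `β_i = λ_i + N - i`; a sum of
distinct monomials determines its set of exponents, and a strictly decreasing sequence is
determined by its set of values.
-/

open Finset Polynomial

theorem Polynomial.coeff_sum_X_pow {R : Type*} [Semiring R] (S : Finset ℕ) (k : ℕ) :
    (∑ e ∈ S, (X : R[X]) ^ e).coeff k = if k ∈ S then 1 else 0 := by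
  simp only [finsetSum_coeff, coeff_X_pow, sum_ite_eq]

theorem Polynomial.sum_X_pow_injective {R : Type*} [Semiring R] [Nontrivial R] :
    Function.Injective fun S : Finset ℕ => ∑ e ∈ S, (X : R[X]) ^ e := by
  intro S T h
  ext k
  have hk := congrArg (coeff · k) h
  simp only [coeff_sum_X_pow] at hk
  by_cases hS : k ∈ S <;> by_cases hT : k ∈ T <;> simp_all

theorem Polynomial.eq_of_sum_X_pow_eq_of_strictAnti {R : Type*} [Semiring R] [Nontrivial R]
    {N : ℕ} {e f : Fin N → ℕ} (he : StrictAnti e) (hf : StrictAnti f)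
    (h : ∑ i, (X : R[X]) ^ e i = ∑ i, (X : R[X]) ^ f i) : e = f := by
  rw [← sum_image fun _ _ _ _ hij => he.injective hij,
    ← sum_image fun _ _ _ _ hij => hf.injective hij] at h
  have himage := Finset.ext_iff.mp (sum_X_pow_injective h)
  refine (he.range_inj hf).mp (Set.ext fun m => ?_)
  simpa using himage m

theorem RatFunc.X_sub_X_inv_ne_zero {K : Type*} [Field K] :
    (RatFunc.X - RatFunc.X⁻¹ : RatFunc K) ≠ 0 := by
  have hX : RatFunc.X * (RatFunc.X - RatFunc.X⁻¹) =
      algebraMap K[X] (RatFunc K) (Polynomial.X ^ 2 - Polynomial.C 1) := by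
    rw [mul_sub, mul_inv_cancel₀ RatFunc.X_ne_zero]
    simp [sq]
  refine right_ne_zero_of_mul (a := RatFunc.X) ?_
  rw [hX, map_ne_zero_iff _ (RatFunc.algebraMap_injective K)]
  exact X_pow_sub_C_ne_zero two_pos _

namespace YPartition

def part (p : YPartition) (i : ℕ) : ℕ := p.parts.getD i 0

theorem part_of_length_le (p : YPartition) {i : ℕ} (hi : p.parts.length ≤ i) : p.part i = 0 :=
  List.getD_eq_default _ _ hi

theorem part_pos_iff (p : YPartition) {i : ℕ} : 0 < p.part i ↔ i < p.parts.length := by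
  refine ⟨fun h => ?_, fun hi => ?_⟩
  · by_contra! hi
    simp [p.part_of_length_le hi] at h
  · rw [part, List.getD_eq_getElem _ _ hi]
    exact p.pos _ (List.getElem_mem hi)

theorem part_antitone (p : YPartition) : Antitone p.part := by
  intro i j hij
  rcases lt_or_ge j p.parts.length with hj | hj
  · rw [part, part, List.getD_eq_getElem _ _ hj, List.getD_eq_getElem _ _ (hij.trans_lt hj)]
    rcases hij.lt_or_eq with hlt | rfl
    · exact List.pairwise_iff_getElem.mp p.sorted i j _ hj hlt
    · rfl
  · simp [p.part_of_length_le hj]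

theorem ext_part {p q : YPartition} (h : p.part = q.part) : p = q := by
  have hlen : p.parts.length = q.parts.length :=
    eq_of_forall_lt_iff fun i => by rw [← part_pos_iff, ← part_pos_iff, h]
  obtain ⟨l, _, _⟩ := p
  obtain ⟨l', _, _⟩ := q
  congr
  refine List.ext_getElem hlen fun i hi hi' => ?_
  have hpart := congrFun h i
  rwa [part, part, List.getD_eq_getElem _ _ hi, List.getD_eq_getElem _ _ hi'] at hpart

-- The β-numbers of `λ` padded to `N` rows; the truncated subtraction is exact since `i < N`.
def beta (p : YPartition) (N : ℕ) (i : Fin N) : ℕ := p.part i + N - i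

theorem beta_strictAnti (p : YPartition) (N : ℕ) : StrictAnti (p.beta N) := by
  intro i j hij
  have hpart := p.part_antitone (Fin.le_def.mp hij.le)
  simp only [beta]
  omega

theorem eq_of_beta_eq {p q : YPartition} {N : ℕ} (hp : p.parts.length ≤ N)
    (hq : q.parts.length ≤ N) (h : p.beta N = q.beta N) : p = q := by
  refine ext_part (funext fun i => ?_)
  rcases lt_or_ge i N with hi | hi
  · have hbeta := congrFun h ⟨i, hi⟩
    simp only [beta] at hbeta
    omega
  · rw [p.part_of_length_le (hp.trans hi), q.part_of_length_le (hq.trans hi)]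

end YPartition

open YPartition

theorem contentEval_eq_sum_range (p : YPartition) {N : ℕ} (hN : p.parts.length ≤ N) :
    contentEval p = ∑ i ∈ range N, ∑ j ∈ range (p.part i),
      (RatFunc.X : RatFunc ℚ) ^ (2 * ((j : ℤ) - i)) := by
  refine sum_subset (range_subset_range.2 hN) fun i _ hi => ?_
  change ∑ j ∈ range (p.part i), _ = 0
  rw [part_of_length_le p (by simpa using hi), sum_range_zero]

theorem X_sq_sub_one_mul_contentEval (p : YPartition) {N : ℕ} (hN : p.parts.length ≤ N) :
    ((RatFunc.X : RatFunc ℚ) ^ 2 - 1) * RatFunc.X ^ (2 * N) * contentEval p =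
      ∑ i ∈ range N, ((RatFunc.X : RatFunc ℚ) ^ (2 * (p.part i + N - i)) -
        RatFunc.X ^ (2 * (N - i))) := by
  rw [contentEval_eq_sum_range p hN, mul_sum]
  set x : RatFunc ℚ := RatFunc.X
  refine sum_congr rfl fun i hi => ?_
  have hi : i ≤ N := (mem_range.mp hi).le
  have hbox : ∀ j : ℕ,
      x ^ (2 * N) * x ^ (2 * ((j : ℤ) - i)) = (x ^ 2) ^ (N - i) * (x ^ 2) ^ j := by
    intro j
    rw [← pow_mul, ← pow_mul, ← zpow_natCast, ← zpow_natCast, ← zpow_natCast,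
      ← zpow_add₀ RatFunc.X_ne_zero, ← zpow_add₀ RatFunc.X_ne_zero]
    congr 1
    push_cast [hi]
    ring
  rw [mul_assoc, mul_sum]
  simp only [hbox, ← mul_sum]
  rw [mul_left_comm, mul_geom_sum, ← pow_mul, ← pow_mul, mul_sub, mul_one, ← pow_add]
  congr 2
  omega

theorem contentEval_injective : Function.Injective contentEval := by
  intro p q hpq
  set N := max p.parts.length q.parts.length
  have hp : p.parts.length ≤ N := le_max_left _ _
  have hq : q.parts.length ≤ N := le_max_right _ _
  have hsum : ∑ i, (X : ℚ[X]) ^ (2 * p.beta N i) = ∑ i, (X : ℚ[X]) ^ (2 * q.beta N i) := by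
    apply RatFunc.algebraMap_injective ℚ
    have h := X_sq_sub_one_mul_contentEval p hp
    rw [hpq, X_sq_sub_one_mul_contentEval q hq, sum_sub_distrib, sum_sub_distrib,
      sub_left_inj] at h
    simpa [sum_range, beta] using h.symm
  have h2beta := eq_of_sum_X_pow_eq_of_strictAnti
    ((strictMono_mul_left_of_pos two_pos).comp_strictAnti (p.beta_strictAnti N))
    ((strictMono_mul_left_of_pos two_pos).comp_strictAnti (q.beta_strictAnti N)) hsum
  exact eq_of_beta_eq hp hq
    (funext fun i => Nat.eq_of_mul_eq_mul_left two_pos (congrFun h2beta i))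

/-- Given pairwise distinct partitions `λ_0, …, λ_{n-1}` and
`b_j = z · C_{λ_j}(s²) + z⁻¹ ∈ ℚ(s)` with `z = s - s⁻¹`, the `n × n` Vandermonde-type
matrix with entries `B_{k,j} = (b_j)^k` is nonsingular. -/
theorem vandermonde_contentEval_det_ne_zero (n : ℕ) (lam : Fin n → YPartition)
    (hlam : Function.Injective lam) :
    (Matrix.of fun k j : Fin n =>
        ((RatFunc.X - RatFunc.X⁻¹) * contentEval (lam j) +
          (RatFunc.X - RatFunc.X⁻¹)⁻¹) ^ (k : ℕ)).det ≠ 0 := by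
  set z : RatFunc ℚ := RatFunc.X - RatFunc.X⁻¹
  have hb : Function.Injective fun j => z * contentEval (lam j) + z⁻¹ :=
    (add_left_injective z⁻¹).comp <|
      (mul_right_injective₀ RatFunc.X_sub_X_inv_ne_zero).comp (contentEval_injective.comp hlam)
  rw [← Matrix.det_transpose]
  exact Matrix.det_vandermonde_ne_zero_iff.mpr hb
end

section
/- Let ℚ(s) be the field of rational functions in s over ℚ and z = s − s⁻¹. Suppose w is a finitely supported function from ordered pairs of partitions to ℚ(s), r ∈ ℚ(s), and for all integers k, l ≥ 0 the equality Σ_{(λ,μ)} w(λ, μ) · (z C_λ(s²) + z⁻¹)^k · (z C_μ(s²) + z⁻¹)^l = z^{−k−l} · r holds. Then w(∅, ∅) = r and w(λ, μ) = 0 whenever (λ, μ) ≠ (∅, ∅). -/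
/-- The empty partition. -/
def YPartition.empty : YPartition := ⟨[], by simp, List.Pairwise.nil⟩

/-- `z = s - s⁻¹` in `ℚ(s)`. -/
noncomputable def zRF : RatFunc ℚ := RatFunc.X - RatFunc.X⁻¹


/-!
Put `a λ = z C_λ(s²) + z⁻¹`, so that `a ∅ = z⁻¹`. Subtracting `r` at `(∅, ∅)` turns the hypothesis
into `Σ v(λ, μ) a_λ^k a_μ^l = 0` for all `k, l`, hence `Σ v(λ, μ) P(a_λ) Q(a_μ) = 0` for all
polynomials `P, Q`; Lagrange basis polynomials then isolate every coefficient `v(λ, μ)`, provided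
`(λ, μ) ↦ (a_λ, a_μ)` is injective. It is, since `z ≠ 0` and `C_λ(s²)` determines `λ`: its
coefficient at `s^(2m)` counts the cells of content `m`, and in a Young diagram these cells form an
initial segment of their diagonal, so the counts determine the diagram.
-/

open Finset Polynomial
open scoped LaurentSeries

section PowerSums

variable {ι K : Type*} [Field K]

theorem Finset.sum_mul_eval_mul_eval_eq_zero {T : Finset ι} {v x y : ι → K}
    (h : ∀ k l : ℕ, ∑ p ∈ T, v p * x p ^ k * y p ^ l = 0) (P Q : K[X]) :
    ∑ p ∈ T, v p * P.eval (x p) * Q.eval (y p) = 0 := by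
  calc ∑ p ∈ T, v p * P.eval (x p) * Q.eval (y p)
      = ∑ p ∈ T, ∑ i ∈ range (P.natDegree + 1), ∑ j ∈ range (Q.natDegree + 1),
          P.coeff i * Q.coeff j * (v p * x p ^ i * y p ^ j) := by
        refine sum_congr rfl fun p _ => ?_
        rw [eval_eq_sum_range, eval_eq_sum_range, mul_assoc, sum_mul_sum, mul_sum]
        refine sum_congr rfl fun i _ => ?_
        rw [mul_sum]
        exact sum_congr rfl fun j _ => by ring
    _ = ∑ i ∈ range (P.natDegree + 1), ∑ j ∈ range (Q.natDegree + 1),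
          P.coeff i * Q.coeff j * ∑ p ∈ T, v p * x p ^ i * y p ^ j := by
        rw [sum_comm]
        simp_rw [mul_sum]
        exact sum_congr rfl fun i _ => sum_comm
    _ = 0 := by simp [h]

theorem Finsupp.eq_zero_of_sum_mul_pow_mul_pow_eq_zero {f : ι → K × K}
    (hf : Function.Injective f) (v : ι →₀ K)
    (h : ∀ k l : ℕ, (v.sum fun p c => c * (f p).1 ^ k * (f p).2 ^ l) = 0) : v = 0 := by
  classical
  ext p
  by_contra hp
  -- Lagrange basis polynomials at the two coordinates of `f p` separate `p` from the rest
  -- of the support.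
  have hpT : p ∈ v.support := Finsupp.mem_support_iff.mpr hp
  let P := Lagrange.basis (v.support.image fun q => (f q).1) id (f p).1
  let Q := Lagrange.basis (v.support.image fun q => (f q).2) id (f p).2
  have hP : P.eval (f p).1 = 1 :=
    Lagrange.eval_basis_self (v := id) (Set.injOn_id _) (Finset.mem_image_of_mem _ hpT)
  have hQ : Q.eval (f p).2 = 1 :=
    Lagrange.eval_basis_self (v := id) (Set.injOn_id _) (Finset.mem_image_of_mem _ hpT)
  have hsum := Finset.sum_mul_eval_mul_eval_eq_zero h P Q
  rw [Finset.sum_eq_single_of_mem p hpT, hP, hQ, mul_one, mul_one] at hsum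
  · exact hp hsum
  · intro q hq hqp
    by_cases h1 : (f p).1 = (f q).1
    · have h2 : (f p).2 ≠ (f q).2 := fun h2 => hf.ne hqp (Prod.ext h1 h2).symm
      have hQq : Q.eval (f q).2 = 0 :=
        Lagrange.eval_basis_of_ne (v := id) h2 (Finset.mem_image_of_mem (fun q => (f q).2) hq)
      rw [hQq, mul_zero]
    · have hPq : P.eval (f q).1 = 0 :=
        Lagrange.eval_basis_of_ne (v := id) h1 (Finset.mem_image_of_mem (fun q => (f q).1) hq)
      rw [hPq, mul_zero, zero_mul]

end PowerSums

section Contents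

def contentCount (s : Finset (ℕ × ℕ)) (m : ℤ) : ℕ := #{c ∈ s | (c.2 : ℤ) - c.1 = m}

variable {s t : Finset (ℕ × ℕ)}

-- The cells of a lower set on a fixed diagonal form an initial segment of that diagonal.
theorem mem_iff_min_lt_contentCount (hs : IsLowerSet (s : Set (ℕ × ℕ))) (i j : ℕ) :
    (i, j) ∈ s ↔ min i j < contentCount s (j - i) := by
  constructor
  · intro hij
    have hcard : #(range (min i j + 1)) ≤ contentCount s (j - i) := by
      refine card_le_card_of_injOn (fun t => (i - t, j - t)) (fun t ht => ?_) ?_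
      · have ht : t ≤ min i j := Nat.lt_succ_iff.mp (mem_range.mp ht)
        refine mem_filter.mpr ⟨hs (Prod.mk_le_mk.mpr ⟨Nat.sub_le i t, Nat.sub_le j t⟩) hij, ?_⟩
        simp only
        omega
      · intro t₁ ht₁ t₂ ht₂ heq
        simp only [coe_range, Set.mem_Iio, Prod.mk.injEq] at ht₁ ht₂ heq
        omega
    simpa using hcard
  · intro hlt
    by_contra hij
    have hbelow : ∀ c ∈ s, (c.2 : ℤ) - c.1 = j - i → c.1 < i := by
      intro c hc hcont
      by_contra! hle
      exact hij (hs (Prod.mk_le_mk.mpr ⟨hle, by omega⟩) hc)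
    have hcard : contentCount s (j - i) ≤ #(range (min i j)) := by
      refine card_le_card_of_injOn (fun c => i - 1 - c.1) (fun c hc => ?_) ?_
      · obtain ⟨hc, hcont⟩ := mem_filter.mp hc
        have := hbelow c hc hcont
        simp only [coe_range, Set.mem_Iio]
        omega
      · intro c hc c' hc' heq
        obtain ⟨hc, hcont⟩ := mem_filter.mp hc
        obtain ⟨hc', hcont'⟩ := mem_filter.mp hc'
        have := hbelow c hc hcont
        have := hbelow c' hc' hcont'
        simp only at heq
        ext <;> omega
    simp only [card_range] at hcard
    omega

theorem eq_of_contentCount_eq (hs : IsLowerSet (s : Set (ℕ × ℕ)))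
    (ht : IsLowerSet (t : Set (ℕ × ℕ))) (h : contentCount s = contentCount t) : s = t := by
  ext ⟨i, j⟩
  rw [mem_iff_min_lt_contentCount hs, mem_iff_min_lt_contentCount ht, h]

variable (F : Type*) [Field F]

noncomputable def contentSum (s : Finset (ℕ × ℕ)) : RatFunc F :=
  ∑ c ∈ s, RatFunc.X ^ (2 * ((c.2 : ℤ) - c.1))

theorem coeff_contentSum (s : Finset (ℕ × ℕ)) (m : ℤ) :
    (contentSum F s : F⸨X⸩).coeff (2 * m) = contentCount s m := by
  simp only [contentSum, contentCount, map_sum, map_zpow₀, RatFunc.coe_X, ← RatFunc.single_zpow,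
    HahnSeries.coeff_sum, HahnSeries.coeff_single]
  rw [card_filter, Nat.cast_sum]
  refine sum_congr rfl fun c _ => ?_
  simp only [mul_right_inj' (two_ne_zero' ℤ), eq_comm (a := m)]
  split_ifs <;> simp

variable {F} [CharZero F]

theorem contentCount_eq_of_contentSum_eq (h : contentSum F s = contentSum F t) :
    contentCount s = contentCount t := by
  funext m
  have := congrArg (fun f : RatFunc F => (f : F⸨X⸩).coeff (2 * m)) h
  simpa only [coeff_contentSum, Nat.cast_inj] using this

end Contents

namespace YPartition

theorem getD_pos_iff (lam : YPartition) (i : ℕ) :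
    0 < lam.parts.getD i 0 ↔ i < lam.parts.length := by
  refine ⟨fun h => ?_, fun h => ?_⟩
  · by_contra! hi
    rw [List.getD_eq_default _ _ hi] at h
    exact h.false
  · rw [List.getD_eq_getElem _ _ h]
    exact lam.pos _ (List.getElem_mem h)

theorem getD_antitone (lam : YPartition) {i i' : ℕ} (hi : i' ≤ i) :
    lam.parts.getD i 0 ≤ lam.parts.getD i' 0 := by
  by_cases hlen : i < lam.parts.length
  · rw [List.getD_eq_getElem _ _ hlen, List.getD_eq_getElem _ _ (by omega)]
    rcases hi.eq_or_lt with rfl | hlt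
    · rfl
    · exact List.pairwise_iff_getElem.mp lam.sorted _ _ _ _ hlt
  · rw [List.getD_eq_default _ _ (by omega)]
    exact Nat.zero_le _

def cells (lam : YPartition) : Finset (ℕ × ℕ) :=
  (range lam.parts.length).biUnion fun i => (range (lam.parts.getD i 0)).image (Prod.mk i)

theorem mem_cells {lam : YPartition} {c : ℕ × ℕ} :
    c ∈ lam.cells ↔ c.1 < lam.parts.length ∧ c.2 < lam.parts.getD c.1 0 := by
  obtain ⟨i, j⟩ := c
  simp [cells]

theorem mk_mem_cells {lam : YPartition} {i j : ℕ} : (i, j) ∈ lam.cells ↔ j < lam.parts.getD i 0 :=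
  mem_cells.trans ⟨And.right, fun h => ⟨(lam.getD_pos_iff i).mp (by omega), h⟩⟩

theorem isLowerSet_cells (lam : YPartition) : IsLowerSet (lam.cells : Set (ℕ × ℕ)) := by
  rintro ⟨i, j⟩ ⟨i', j'⟩ ⟨hi, hj⟩ h
  simp only [mem_coe, mk_mem_cells] at h ⊢
  exact lt_of_le_of_lt hj (h.trans_le (lam.getD_antitone hi))

theorem cells_injective : Function.Injective cells := by
  intro lam mu h
  have hrow (i : ℕ) : lam.parts.getD i 0 = mu.parts.getD i 0 :=
    eq_of_forall_lt_iff fun j => by rw [← mk_mem_cells, ← mk_mem_cells, h]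
  have hlen : lam.parts.length = mu.parts.length :=
    eq_of_forall_lt_iff fun i => by rw [← getD_pos_iff, ← getD_pos_iff, hrow]
  obtain ⟨l, _, _⟩ := lam
  obtain ⟨m, _, _⟩ := mu
  congr
  refine List.ext_getElem hlen fun i h₁ h₂ => ?_
  have := hrow i
  rwa [List.getD_eq_getElem _ _ h₁, List.getD_eq_getElem _ _ h₂] at this

theorem contentEval_eq_contentSum (lam : YPartition) :
    contentEval lam = contentSum ℚ lam.cells := by
  rw [contentEval, contentSum, sum_finset_product lam.cells (range lam.parts.length)
    (fun i => range (lam.parts.getD i 0)) fun _ => by simp only [mem_cells, mem_range]]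

theorem contentEval_injective : Function.Injective contentEval := fun lam mu h =>
  cells_injective <| eq_of_contentCount_eq lam.isLowerSet_cells mu.isLowerSet_cells <|
    contentCount_eq_of_contentSum_eq <| by
      rwa [← contentEval_eq_contentSum, ← contentEval_eq_contentSum]

end YPartition

theorem zRF_ne_zero : zRF ≠ 0 := by
  intro h
  have := congrArg (fun f : RatFunc ℚ => (f : ℚ⸨X⸩).coeff 1) h
  simp [zRF, map_sub, map_inv₀, RatFunc.coe_X, HahnSeries.inv_single] at this

theorem contentEval_empty : contentEval YPartition.empty = 0 := by
  simp [contentEval, YPartition.empty]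

/-- Suppose `w` is a finitely supported function from ordered pairs of partitions to
`ℚ(s)` and `r ∈ ℚ(s)` satisfy, for all `k, l ≥ 0`,
`Σ_{(λ,μ)} w(λ,μ) · (z C_λ(s²) + z⁻¹)^k · (z C_μ(s²) + z⁻¹)^l = z^(−k−l) · r`.
Then `w(∅, ∅) = r` and `w(λ, μ) = 0` for `(λ, μ) ≠ (∅, ∅)`. -/
theorem unique_solution_of_eigenvalue_system
    (w : (YPartition × YPartition) →₀ RatFunc ℚ) (r : RatFunc ℚ)
    (h : ∀ k l : ℕ,
      (w.sum fun p c =>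
        c * (zRF * contentEval p.1 + zRF⁻¹) ^ k * (zRF * contentEval p.2 + zRF⁻¹) ^ l)
        = zRF ^ (-(k : ℤ) - (l : ℤ)) * r) :
    w (YPartition.empty, YPartition.empty) = r ∧
      ∀ p : YPartition × YPartition, p ≠ (YPartition.empty, YPartition.empty) → w p = 0 := by
  let a (lam : YPartition) : RatFunc ℚ := zRF * contentEval lam + zRF⁻¹
  have ha : Function.Injective a := fun lam mu hlm =>
    YPartition.contentEval_injective (mul_left_cancel₀ zRF_ne_zero (add_right_cancel hlm))
  have hw : w = Finsupp.single (YPartition.empty, YPartition.empty) r := by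
    rw [← sub_eq_zero]
    refine Finsupp.eq_zero_of_sum_mul_pow_mul_pow_eq_zero (f := Prod.map a a)
      (ha.prodMap ha) _ fun k l => ?_
    rw [Finsupp.sum_sub_index fun _ _ _ => by ring]
    simp only [Prod.map_fst, Prod.map_snd, a]
    rw [h k l, Finsupp.sum_single_index (by ring)]
    simp only [contentEval_empty, mul_zero, zero_add, inv_pow, zpow_sub₀ zRF_ne_zero, zpow_neg,
      zpow_natCast]
    ring
  subst hw
  exact ⟨Finsupp.single_eq_same, fun p hp => Finsupp.single_eq_of_ne hp⟩
end
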